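/- arXiv:0806.1764 — 2 statements merged into one kernel-verified Lean document; each statement's English description precedes it below -/
import Mathlib

section
/- Given initial data (x₀, y₀) ∈ ℝ², the curves x(t) = cos(ω(r)F(t))x₀ + sin(ω(r)F(t))y₀ and y(t) = −sin(ω(r)F(t))x₀ + cos(ω(r)F(t))y₀, where r² = x₀²+y₀², ω(r) = 1/(a²+r²), and F is differentiable with F' = f, solve the system x' = f(t)·y/(a²+x²+y²), y' = −f(t)·x/(a²+x²+y²). -/
theorem vortex_explicit_solution (a : ℝ) (ha : 0 < a) (f F : ℝ → ℝ)
    (hf : Continuous f) (hF0 : F 0 = 0) (hF : ∀ t, HasDerivAt F (f t) t)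
    (x₀ y₀ : ℝ)
    (ω : ℝ) (hω : ω = 1 / (a ^ 2 + (x₀ ^ 2 + y₀ ^ 2)))
    (x y : ℝ → ℝ)
    (hxdef : ∀ t, x t = Real.cos (ω * F t) * x₀ + Real.sin (ω * F t) * y₀)
    (hydef : ∀ t, y t = -Real.sin (ω * F t) * x₀ + Real.cos (ω * F t) * y₀) :
    ∀ t, HasDerivAt x (f t * y t / (a ^ 2 + x t ^ 2 + y t ^ 2)) t ∧
         HasDerivAt y (-(f t * x t) / (a ^ 2 + x t ^ 2 + y t ^ 2)) t := by
  intro t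
  have hd : a ^ 2 + (x₀ ^ 2 + y₀ ^ 2) ≠ 0 := by positivity
  have hsum : x t ^ 2 + y t ^ 2 = x₀ ^ 2 + y₀ ^ 2 := by
    rw [hxdef, hydef]
    have := Real.sin_sq_add_cos_sq (ω * F t)
    nlinarith [this]
  have hden : a ^ 2 + x t ^ 2 + y t ^ 2 = a ^ 2 + (x₀ ^ 2 + y₀ ^ 2) := by
    rw [← hsum]; ring
  have hθ : HasDerivAt (fun t => ω * F t) (ω * f t) t := (hF t).const_mul ω
  have hcos : HasDerivAt (fun t => Real.cos (ω * F t))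
      (-Real.sin (ω * F t) * (ω * f t)) t := (Real.hasDerivAt_cos _).comp t hθ
  have hsin : HasDerivAt (fun t => Real.sin (ω * F t))
      (Real.cos (ω * F t) * (ω * f t)) t := (Real.hasDerivAt_sin _).comp t hθ
  have hx : HasDerivAt x
      (-Real.sin (ω * F t) * (ω * f t) * x₀ + Real.cos (ω * F t) * (ω * f t) * y₀) t := by
    have := (hcos.mul_const x₀).add (hsin.mul_const y₀)
    exact (this.congr_of_eventuallyEq (Filter.Eventually.of_forall fun s => (hxdef s)))
  have hy : HasDerivAt y
      (-(Real.cos (ω * F t) * (ω * f t)) * x₀ + -Real.sin (ω * F t) * (ω * f t) * y₀) t := by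
    have := ((hsin.neg).mul_const x₀).add (hcos.mul_const y₀)
    exact (this.congr_of_eventuallyEq (Filter.Eventually.of_forall fun s => (hydef s)))
  constructor
  · convert hx using 1
    rw [hden, hydef, hω]
    field_simp
  · convert hy using 1
    rw [hden, hxdef, hω]
    field_simp
    ring
end

section
/- Averaging theorem for linear ODEs (finite-dimensional analogue of Krol's theorem): let A : ℝ → Matrix (Fin n) (Fin n) ℝ be continuous and T-periodic with average Ā = (1/T)∫₀ᵀ A, let ε > 0, and let v, V solve v' = εA(t)v and V' = εĀV with v(0) = V(0) = v₀. Then there is a constant C (depending on A, T, n, ‖v₀‖ but not on ε) such that ‖v(t) − V(t)‖ ≤ Cε for all t ∈ [0, 1/ε]. -/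
open Real Set

/-- Entrywise bound on matrix-vector multiplication for the sup norm. -/
lemma mulVec_norm_le' {n : ℕ} (M : Matrix (Fin n) (Fin n) ℝ) (x : Fin n → ℝ) :
    ‖M.mulVec x‖ ≤ (∑ i, ∑ j, |M i j|) * ‖x‖ := by
  have hC : 0 ≤ (∑ i, ∑ j, |M i j|) * ‖x‖ := by positivity
  rw [pi_norm_le_iff_of_nonneg hC]
  intro i
  calc ‖M.mulVec x i‖ = |∑ j, M i j * x j| := by
        simp [Matrix.mulVec, dotProduct, Real.norm_eq_abs]
    _ ≤ ∑ j, |M i j * x j| := Finset.abs_sum_le_sum_abs _ _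
    _ ≤ ∑ j, |M i j| * ‖x‖ := by
        refine Finset.sum_le_sum fun j _ => ?_
        rw [abs_mul]
        exact mul_le_mul_of_nonneg_left (norm_le_pi_norm x j) (abs_nonneg _)
    _ = (∑ j, |M i j|) * ‖x‖ := by rw [Finset.sum_mul]
    _ ≤ (∑ i, ∑ j, |M i j|) * ‖x‖ := by
        refine mul_le_mul_of_nonneg_right ?_ (norm_nonneg _)
        exact Finset.single_le_sum (f := fun i => ∑ j, |M i j|)
          (fun i _ => by positivity) (Finset.mem_univ i)

/-- A continuous periodic real function is bounded. -/
lemma periodic_bounded' {f : ℝ → ℝ} {T : ℝ} (hT : 0 < T) (hc : Continuous f)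
    (hp : Function.Periodic f T) : ∃ C, 0 ≤ C ∧ ∀ t, |f t| ≤ C := by
  obtain ⟨C, hC⟩ := (isCompact_Icc (a := (0:ℝ)) (b := T)).exists_bound_of_continuousOn
    hc.continuousOn
  refine ⟨max C 0, le_max_right _ _, fun t => ?_⟩
  obtain ⟨y, hy, hfy⟩ := hp.exists_mem_Ico₀ hT t
  rw [hfy, ← Real.norm_eq_abs]
  exact le_trans (hC y (Set.Ico_subset_Icc_self hy)) (le_max_left _ _)

lemma exp_sub_one_le' {y : ℝ} (hy : 0 ≤ y) : Real.exp y - 1 ≤ y * Real.exp y := by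
  have h1 : Real.exp (-y) * Real.exp y = 1 := by rw [← Real.exp_add]; simp
  nlinarith [Real.add_one_le_exp (-y), Real.exp_pos y]

set_option maxHeartbeats 1600000 in
theorem averaging_linear_ode (n : ℕ) (T : ℝ) (hT : 0 < T)
    (A : ℝ → Matrix (Fin n) (Fin n) ℝ) (hA : ∀ i j, Continuous fun t => A t i j)
    (hper : ∀ t, A (t + T) = A t)
    (Abar : Matrix (Fin n) (Fin n) ℝ)
    (hAbar : ∀ i j, Abar i j = (1 / T) * ∫ s in (0:ℝ)..T, A s i j)
    (v₀ : Fin n → ℝ) :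
    ∃ C : ℝ, ∀ ε > (0:ℝ), ∀ v V : ℝ → (Fin n → ℝ),
      v 0 = v₀ → V 0 = v₀ →
      (∀ t, HasDerivAt v (ε • (A t).mulVec (v t)) t) →
      (∀ t, HasDerivAt V (ε • Abar.mulVec (V t)) t) →
      ∀ t ∈ Set.Icc (0:ℝ) (1 / ε), ‖v t - V t‖ ≤ C * ε := by
  -- entrywise sum functions
  set a : ℝ → ℝ := fun t => ∑ i, ∑ j, |A t i j| with ha_def
  have ha_cont : Continuous a := by
    apply continuous_finset_sum; intro i _
    apply continuous_finset_sum; intro j _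
    exact (hA i j).abs
  have ha_per : Function.Periodic a T := fun t => by simp [ha_def, hper t]
  obtain ⟨Ma, hMa0, hMa⟩ := periodic_bounded' hT ha_cont ha_per
  have ha_nonneg : ∀ t, 0 ≤ a t := fun t => by positivity
  set ab : ℝ := ∑ i, ∑ j, |Abar i j| with hab_def
  have hab0 : 0 ≤ ab := by positivity
  -- the antiderivative of A - Abar
  set B : ℝ → Matrix (Fin n) (Fin n) ℝ :=
    fun t i j => ∫ s in (0:ℝ)..t, (A s i j - Abar i j) with hB_def
  have hint : ∀ i j (u w : ℝ),
      IntervalIntegrable (fun s => A s i j - Abar i j) MeasureTheory.volume u w :=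
    fun i j u w => ((hA i j).sub continuous_const).intervalIntegrable u w
  have hB_deriv : ∀ i j t, HasDerivAt (fun t => B t i j) (A t i j - Abar i j) t :=
    fun i j t => (((hA i j).sub continuous_const).integral_hasStrictDerivAt 0 t).hasDerivAt
  have hB_cont : ∀ i j, Continuous fun t => B t i j := fun i j =>
    continuous_iff_continuousAt.2 fun t => (hB_deriv i j t).continuousAt
  have key : ∀ i j, ∫ s in (0:ℝ)..T, (A s i j - Abar i j) = 0 := by
    intro i j
    rw [intervalIntegral.integral_sub ((hA i j).intervalIntegrable 0 T)
      (intervalIntegrable_const)]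
    rw [intervalIntegral.integral_const, hAbar i j]
    field_simp
    rw [sub_zero, smul_eq_mul, mul_div_assoc', mul_div_cancel_left₀ _ hT.ne', sub_self]
  have hBper : ∀ i j, Function.Periodic (fun t => B t i j) T := by
    intro i j t
    have hp' : Function.Periodic (fun s => A s i j - Abar i j) T := fun s => by
      simp [hper s]
    show (∫ s in (0:ℝ)..(t + T), (A s i j - Abar i j)) = ∫ s in (0:ℝ)..t, (A s i j - Abar i j)
    rw [← intervalIntegral.integral_add_adjacent_intervals (hint i j 0 t) (hint i j t (t + T)),
      hp'.intervalIntegral_add_eq t 0]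
    simp [key i j]
  set b : ℝ → ℝ := fun t => ∑ i, ∑ j, |B t i j| with hb_def
  have hb_cont : Continuous b := by
    apply continuous_finset_sum; intro i _
    apply continuous_finset_sum; intro j _
    exact (hB_cont i j).abs
  have hb_per : Function.Periodic b T := by
    intro t
    show (∑ i, ∑ j, |B (t + T) i j|) = ∑ i, ∑ j, |B t i j|
    exact Finset.sum_congr rfl fun i _ => Finset.sum_congr rfl fun j _ =>
      congrArg abs (hBper i j t)
  obtain ⟨Mb, hMb0, hMb⟩ := periodic_bounded' hT hb_cont hb_per
  have hb_nonneg : ∀ t, 0 ≤ b t := fun t => by positivity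
  -- the constants
  set cV : ℝ := ‖v₀‖ * Real.exp (ab + 1) with hcV_def
  have hcV0 : 0 ≤ cV := by positivity
  set c₁ : ℝ := (Ma * Mb + Mb * ab) * cV with hc₁_def
  have hc₁0 : 0 ≤ c₁ := by positivity
  refine ⟨c₁ * Real.exp (Ma + 1) + Mb * cV, ?_⟩
  intro ε hε v V hv0 hV0 hv hV t ht
  have hε' : (0:ℝ) < 1 / ε := by positivity
  -- bound on V on [0, 1/ε]
  have hVbound : ∀ x ∈ Set.Icc (0:ℝ) (1 / ε), ‖V x‖ ≤ cV := by
    have hgron := norm_le_gronwallBound_of_norm_deriv_right_le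
      (f := V) (f' := fun t => ε • Abar.mulVec (V t)) (δ := ‖v₀‖) (K := ε * (ab + 1))
      (ε := 0) (a := (0:ℝ)) (b := 1 / ε)
      (fun x _ => ((hV x).continuousAt).continuousWithinAt)
      (fun x _ => (hV x).hasDerivWithinAt) (le_of_eq (by rw [hV0]))
      (fun x _ => by
        rw [norm_smul, Real.norm_eq_abs, abs_of_pos hε]
        have h1 := mulVec_norm_le' Abar (V x)
        have h2 : (∑ i, ∑ j, |Abar i j|) * ‖V x‖ ≤ (ab + 1) * ‖V x‖ := by
          apply mul_le_mul_of_nonneg_right (by linarith) (norm_nonneg _)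
        calc ε * ‖Abar.mulVec (V x)‖ ≤ ε * ((ab + 1) * ‖V x‖) := by
              apply mul_le_mul_of_nonneg_left (le_trans h1 h2) hε.le
          _ = ε * (ab + 1) * ‖V x‖ + 0 := by ring)
    intro x hx
    have := hgron x hx
    rw [gronwallBound_ε0, sub_zero] at this
    refine le_trans this ?_
    rw [hcV_def]
    apply mul_le_mul_of_nonneg_left _ (norm_nonneg _)
    apply Real.exp_le_exp.2
    have h1 : ε * x ≤ 1 := by
      rw [← le_div_iff₀' hε]; exact hx.2
    nlinarith [hx.1]
  -- the corrected difference w = v - V - ε B V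
  set w : ℝ → Fin n → ℝ := fun t => v t - V t - ε • (B t).mulVec (V t) with hw_def
  -- derivative of B V
  have hg : ∀ t, HasDerivAt (fun t => (B t).mulVec (V t))
      ((A t - Abar).mulVec (V t) + ε • (B t).mulVec (Abar.mulVec (V t))) t := by
    intro t
    rw [hasDerivAt_pi]
    intro i
    have hVj : ∀ j, HasDerivAt (fun x => V x j) ((ε • Abar.mulVec (V t)) j) t :=
      fun j => hasDerivAt_pi.1 (hV t) j
    have : HasDerivAt (fun x => ∑ j, B x i j * V x j)
        (∑ j, ((A t i j - Abar i j) * V t j + B t i j * ((ε • Abar.mulVec (V t)) j))) t := by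
      apply HasDerivAt.fun_sum
      intro j _
      exact (hB_deriv i j t).mul (hVj j)
    have heq : (fun x => ((B x).mulVec (V x)) i) = fun x => ∑ j, B x i j * V x j := by
      funext x
      simp [Matrix.mulVec, dotProduct]
    have hval : ((A t - Abar).mulVec (V t) + ε • (B t).mulVec (Abar.mulVec (V t))) i
        = ∑ j, ((A t i j - Abar i j) * V t j + B t i j * ((ε • Abar.mulVec (V t)) j)) := by
      simp only [Matrix.mulVec, dotProduct, Pi.add_apply, Pi.smul_apply,
        Matrix.sub_apply, smul_eq_mul, Finset.sum_add_distrib]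
      congr 1
      rw [Finset.mul_sum]
      exact Finset.sum_congr rfl fun j _ => by ring
    rw [show (fun x => (B x).mulVec (V x) i) = fun x => ∑ j, B x i j * V x j from heq, hval]
    exact this
  -- derivative of w
  have hw_deriv : ∀ t, HasDerivAt w
      (ε • (A t).mulVec (w t) +
        (ε * ε) • ((A t).mulVec ((B t).mulVec (V t)) - (B t).mulVec (Abar.mulVec (V t)))) t := by
    intro t
    have h := ((hv t).sub (hV t)).sub ((hg t).const_smul ε)
    have hid : ε • (A t).mulVec (v t) - ε • Abar.mulVec (V t) -
        ε • ((A t - Abar).mulVec (V t) + ε • (B t).mulVec (Abar.mulVec (V t)))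
        = ε • (A t).mulVec (w t) +
          (ε * ε) • ((A t).mulVec ((B t).mulVec (V t)) - (B t).mulVec (Abar.mulVec (V t))) := by
      simp only [hw_def, Matrix.sub_mulVec, Matrix.mulVec_sub, Matrix.mulVec_smul,
        smul_sub, smul_add, smul_smul]
      module
    rw [hid] at h
    exact h
  have hw0 : w 0 = 0 := by
    have hB0 : ∀ i j, B 0 i j = 0 := fun i j => intervalIntegral.integral_same
    have h0 : (B 0).mulVec (V 0) = 0 := by
      funext i
      simp [Matrix.mulVec, dotProduct, hB0]
    show v 0 - V 0 - ε • (B 0).mulVec (V 0) = 0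
    rw [h0, hv0, hV0]
    simp
  -- Gronwall for w
  have hwbound : ∀ x ∈ Set.Icc (0:ℝ) (1 / ε),
      ‖w x‖ ≤ gronwallBound 0 (ε * (Ma + 1)) (ε * ε * c₁) x := by
    have hgron := norm_le_gronwallBound_of_norm_deriv_right_le
      (f := w)
      (f' := fun t => ε • (A t).mulVec (w t) +
        (ε * ε) • ((A t).mulVec ((B t).mulVec (V t)) - (B t).mulVec (Abar.mulVec (V t))))
      (δ := 0) (K := ε * (Ma + 1)) (ε := ε * ε * c₁) (a := (0:ℝ)) (b := 1 / ε)
      (fun x _ => ((hw_deriv x).continuousAt).continuousWithinAt)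
      (fun x _ => (hw_deriv x).hasDerivWithinAt)
      (by rw [hw0]; simp)
      ?_
    · intro x hx
      have := hgron x hx
      rwa [sub_zero] at this
    · intro x hx
      have hVx : ‖V x‖ ≤ cV := hVbound x (Set.Ico_subset_Icc_self hx)
      have h1 : ‖(A x).mulVec (w x)‖ ≤ (Ma + 1) * ‖w x‖ := by
        refine le_trans (mulVec_norm_le' _ _) ?_
        apply mul_le_mul_of_nonneg_right _ (norm_nonneg _)
        have := hMa x
        have := ha_nonneg x
        simp only [ha_def] at *
        linarith [abs_le.1 (hMa x) |>.2]
      have h2 : ‖(A x).mulVec ((B x).mulVec (V x))‖ ≤ Ma * Mb * ‖V x‖ := by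
        refine le_trans (mulVec_norm_le' _ _) ?_
        have hB1 : ‖(B x).mulVec (V x)‖ ≤ Mb * ‖V x‖ := by
          refine le_trans (mulVec_norm_le' _ _) ?_
          exact mul_le_mul_of_nonneg_right (le_trans (le_abs_self _) (hMb x)) (norm_nonneg _)
        calc (∑ i, ∑ j, |A x i j|) * ‖(B x).mulVec (V x)‖
            ≤ Ma * (Mb * ‖V x‖) := by
              apply mul_le_mul (le_trans (le_abs_self _) (hMa x)) hB1 (norm_nonneg _) hMa0
          _ = Ma * Mb * ‖V x‖ := by ring
      have h3 : ‖(B x).mulVec (Abar.mulVec (V x))‖ ≤ Mb * ab * ‖V x‖ := by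
        refine le_trans (mulVec_norm_le' _ _) ?_
        have hA1 : ‖Abar.mulVec (V x)‖ ≤ ab * ‖V x‖ := mulVec_norm_le' _ _
        calc (∑ i, ∑ j, |B x i j|) * ‖Abar.mulVec (V x)‖
            ≤ Mb * (ab * ‖V x‖) := by
              apply mul_le_mul (le_trans (le_abs_self _) (hMb x)) hA1 (norm_nonneg _) hMb0
          _ = Mb * ab * ‖V x‖ := by ring
      calc ‖ε • (A x).mulVec (w x) +
            (ε * ε) • ((A x).mulVec ((B x).mulVec (V x)) - (B x).mulVec (Abar.mulVec (V x)))‖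
          ≤ ‖ε • (A x).mulVec (w x)‖ +
            ‖(ε * ε) • ((A x).mulVec ((B x).mulVec (V x)) - (B x).mulVec (Abar.mulVec (V x)))‖ :=
            norm_add_le _ _
        _ ≤ ε * ((Ma + 1) * ‖w x‖) + ε * ε *
              (‖(A x).mulVec ((B x).mulVec (V x))‖ + ‖(B x).mulVec (Abar.mulVec (V x))‖) := by
            rw [norm_smul, norm_smul, Real.norm_eq_abs, Real.norm_eq_abs,
              abs_of_pos hε, abs_of_pos (mul_pos hε hε)]
            gcongr
            exact norm_sub_le _ _
        _ ≤ ε * ((Ma + 1) * ‖w x‖) + ε * ε * (Ma * Mb * ‖V x‖ + Mb * ab * ‖V x‖) := by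
            gcongr
        _ ≤ ε * ((Ma + 1) * ‖w x‖) + ε * ε * ((Ma * Mb + Mb * ab) * cV) := by
            gcongr ε * ((Ma + 1) * ‖w x‖) + ε * ε * ?_
            have hsum : (0:ℝ) ≤ Ma * Mb + Mb * ab := by positivity
            nlinarith [hVx, hsum, norm_nonneg (V x)]
        _ = ε * (Ma + 1) * ‖w x‖ + ε * ε * c₁ := by rw [hc₁_def]; ring
  -- evaluate the Gronwall bound
  have hwt : ‖w t‖ ≤ ε * (c₁ * Real.exp (Ma + 1)) := by
    refine le_trans (hwbound t ht) ?_
    set K : ℝ := ε * (Ma + 1) with hK_def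
    have hK : 0 < K := by positivity
    rw [gronwallBound_of_K_ne_0 hK.ne']
    simp only [zero_mul, zero_add]
    have hεt : ε * t ≤ 1 := by
      rw [← le_div_iff₀' hε]; exact ht.2
    have ht0 : 0 ≤ t := ht.1
    have hKt : 0 ≤ K * t := by positivity
    have hexp : Real.exp (K * t) - 1 ≤ K * t * Real.exp (K * t) := exp_sub_one_le' hKt
    have hKt1 : K * t ≤ Ma + 1 := by
      rw [hK_def]
      nlinarith
    have hexp2 : Real.exp (K * t) ≤ Real.exp (Ma + 1) := Real.exp_le_exp.2 hKt1
    calc ε * ε * c₁ / K * (Real.exp (K * t) - 1)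
        ≤ ε * ε * c₁ / K * (K * t * Real.exp (K * t)) := by
          apply mul_le_mul_of_nonneg_left hexp (by positivity)
      _ = ε * ε * c₁ * t * Real.exp (K * t) := by field_simp
      _ ≤ ε * c₁ * Real.exp (Ma + 1) := by
          have h1 : ε * ε * c₁ * t = ε * c₁ * (ε * t) := by ring
          rw [h1]
          calc ε * c₁ * (ε * t) * Real.exp (K * t)
              ≤ ε * c₁ * 1 * Real.exp (Ma + 1) := by
                apply mul_le_mul _ hexp2 (Real.exp_pos _).le (by positivity)
                apply mul_le_mul_of_nonneg_left hεt (by positivity)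
            _ = ε * c₁ * Real.exp (Ma + 1) := by ring
      _ = ε * (c₁ * Real.exp (Ma + 1)) := by ring
  -- conclude
  have hsplit : v t - V t = w t + ε • (B t).mulVec (V t) := by
    simp [hw_def]
  rw [hsplit]
  have hBV : ‖(B t).mulVec (V t)‖ ≤ Mb * cV := by
    refine le_trans (mulVec_norm_le' _ _) ?_
    apply mul_le_mul (le_trans (le_abs_self _) (hMb t)) (hVbound t ht) (norm_nonneg _) hMb0
  calc ‖w t + ε • (B t).mulVec (V t)‖ ≤ ‖w t‖ + ‖ε • (B t).mulVec (V t)‖ := norm_add_le _ _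
    _ ≤ ε * (c₁ * Real.exp (Ma + 1)) + ε * (Mb * cV) := by
        rw [norm_smul, Real.norm_eq_abs, abs_of_pos hε]
        gcongr
    _ = (c₁ * Real.exp (Ma + 1) + Mb * cV) * ε := by ring
end
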